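/- Let α be a type and let w be a freely reduced word over α × Bool. Let k be a natural number with k ≤ |w| such that the length-k prefix of w equals the length-k prefix of inv(w), and suppose k is maximal in the sense that either k = |w| or the letter of w in position k differs from the letter of inv(w) in position k. Then 2k ≤ |w|; the word c = w[k:|w|−k] (w with its first k and last k letters deleted) is cyclically reduced; and FreeGroup.mk w = FreeGroup.mk (w[:k]) * FreeGroup.mk c * (FreeGroup.mk (w[:k]))⁻¹ in the free group on α. -/

import Mathlib

/-!
The length-`k` prefix of `inv(w)` is the inverse of the length-`k` suffix of `w`, so with
`u = w[:k]` the hypothesis says that `w` ends in `inv(u)`. If `2k > |w|`, this prefix and suffix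
overlap in a nonempty segment `s` with `inv(s) = s`, and peeling letters off both ends of `s` ends
either in a letter equal to its own inverse or in a cancelling pair, impossible in a reduced word.
So `w = u · c · inv(u)`, and the maximality of `k` says exactly that the first and last letters of
`c` do not cancel; as every rotation of `c` is a subword of `c · c`, the word `c` is cyclically
reduced.
-/

/-- A word over `α × Bool` is freely reduced if it contains no adjacent pair
`(x, b) (x, !b)`. -/
def Reduced {α : Type*} (w : List (α × Bool)) : Prop :=
  ∀ (x : α) (b : Bool), ¬ ([(x, b), (x, !b)] <:+: w)

/-- A word over `α × Bool` is cyclically reduced if all of its rotations are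
freely reduced. -/
def CyclicallyReduced {α : Type*} (w : List (α × Bool)) : Prop :=
  ∀ n : ℕ, Reduced (w.rotate n)

/-- The formal inverse of a word over `α × Bool`: the reverse of the word with
every letter's Boolean component negated. -/
def invWord {α : Type*} (w : List (α × Bool)) : List (α × Bool) :=
  (w.map fun p => (p.1, !p.2)).reverse

open List

theorem List.rotate_infix_append_self {β : Type*} (l : List β) (n : ℕ) :
    l.rotate n <:+: l ++ l := by
  rw [rotate_eq_drop_append_take_mod]
  exact ⟨l.take (n % l.length), l.drop (n % l.length), by
    rw [append_assoc, append_assoc, take_append_drop, ← append_assoc, take_append_drop]⟩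

theorem List.take_append_drop_take_append_drop {β : Type*} (l : List β) {i j : ℕ}
    (h : i ≤ j) :
    l.take i ++ (l.take j).drop i ++ l.drop j = l := by
  conv_rhs => rw [← take_append_drop j l, ← take_append_drop i (l.take j)]
  rw [take_take, min_eq_left h]

theorem invWord_eq_invRev {α : Type*} : (invWord : List (α × Bool) → _) = FreeGroup.invRev := rfl

namespace FreeGroup

variable {α : Type*}

theorem reduced_iff_isReduced {w : List (α × Bool)} : Reduced w ↔ IsReduced w := by
  rw [IsReduced, isChain_iff_forall_rel_of_append_cons_cons]
  constructor
  · rintro hw ⟨x, b⟩ ⟨y, c⟩ s t rfl rfl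
    by_contra hbc
    obtain rfl : c = !b := Bool.eq_not_iff.mpr (Ne.symm hbc)
    exact hw x b ⟨s, t, by simp⟩
  · rintro hw x b ⟨s, t, rfl⟩
    simpa using hw (a := (x, b)) (b := (x, !b)) (l₁ := s) (l₂ := t) (by simp) rfl

theorem IsCyclicallyReduced.isReduced_append_self {w : List (α × Bool)}
    (hw : IsCyclicallyReduced w) : IsReduced (w ++ w) :=
  isChain_append.mpr ⟨hw.1, hw.1, hw.2⟩

theorem IsCyclicallyReduced.cyclicallyReduced {w : List (α × Bool)}
    (hw : IsCyclicallyReduced w) : CyclicallyReduced w := fun n =>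
  reduced_iff_isReduced.mpr (hw.isReduced_append_self.infix (rotate_infix_append_self w n))

theorem take_invRev (w : List (α × Bool)) (k : ℕ) :
    (invRev w).take k = invRev (w.drop (w.length - k)) := by
  simp [invRev, take_reverse, map_drop]

theorem head?_invRev (w : List (α × Bool)) :
    (invRev w).head? = w.getLast?.map fun a => (a.1, !a.2) := by
  simp [invRev, head?_reverse, getLast?_map]

theorem invRev_cons_append (a b : α × Bool) (l : List (α × Bool)) :
    invRev (a :: (l ++ [b])) = (b.1, !b.2) :: (invRev l ++ [(a.1, !a.2)]) := by
  simp [invRev]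

theorem IsReduced.invRev_ne_self {s : List (α × Bool)} (hs : IsReduced s) (hne : s ≠ []) :
    invRev s ≠ s := by
  induction s using bidirectionalRec with
  | nil => exact absurd rfl hne
  | singleton a => simp [invRev, Prod.ext_iff]
  | cons_append a l b ih =>
    intro h
    rw [invRev_cons_append] at h
    obtain ⟨rfl, h⟩ := cons.inj h
    have hl : invRev l = l := (append_inj' h rfl).1
    rcases eq_or_ne l [] with rfl | hl_ne
    · simp [IsReduced] at hs
    · exact ih (hs.infix ⟨[(b.1, !b.2)], [b], rfl⟩) hl_ne hl

theorem IsReduced.two_mul_le_length {w : List (α × Bool)} {k : ℕ} (hw : IsReduced w)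
    (hk : k ≤ w.length) (h : w.take k = invRev (w.drop (w.length - k))) :
    2 * k ≤ w.length := by
  by_contra hlt
  set m := w.length - k
  set s := (w.drop m).take (k - m)
  have htake : w.take k = w.take m ++ s := by
    rw [← take_add]; congr 1; omega
  have hdrop : w.drop m = s ++ w.drop k := by
    rw [← take_append_drop (k - m) (w.drop m), drop_drop]; congr 2; omega
  rw [htake, hdrop, invRev_append] at h
  obtain ⟨-, hs⟩ := append_inj h (by rw [length_take, invRev_length, length_drop]; omega)
  refine hw.infix ?_ |>.invRev_ne_self ?_ hs.symm
  · exact (take_prefix _ _).isInfix.trans (drop_suffix _ _).isInfix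
  · rw [← length_pos_iff, length_take, length_drop]; omega

theorem isCyclicallyReduced_of_getElem?_ne_invRev {u c : List (α × Bool)}
    (hw : IsReduced (u ++ c ++ invRev u))
    (h : (u ++ c ++ invRev u)[u.length]? ≠ (invRev (u ++ c ++ invRev u))[u.length]?) :
    IsCyclicallyReduced c := by
  rcases eq_or_ne c [] with rfl | hc
  · exact .nil
  refine ⟨hw.infix ⟨u, invRev u, rfl⟩, fun a ha b hb hab => ?_⟩
  by_contra hne
  simp only [invRev_append, invRev_invRev, append_assoc] at h
  rw [getElem?_append_right le_rfl, getElem?_append_right le_rfl, Nat.sub_self,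
    ← head?_eq_getElem?, ← head?_eq_getElem?, head?_append_of_ne_nil _ hc,
    head?_append_of_ne_nil _ (by simpa [invRev] using hc), head?_invRev,
    Option.mem_def.mp ha, Option.mem_def.mp hb] at h
  exact h (by simpa [Prod.ext_iff, hab] using Bool.eq_not_iff.mpr (Ne.symm hne))

end FreeGroup

open FreeGroup

/-- Correctness of the cyclic reduction algorithm: if `w` is freely reduced and
`k` is the length of the maximal common prefix of `w` and `inv(w)`, then
`2k ≤ |w|`, the word `c = w[k:|w|-k]` is cyclically reduced, and
`w` represents `w[:k] · c · w[:k]⁻¹` in the free group. -/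
theorem cyclic_reduction {α : Type*} (w : List (α × Bool)) (hw : Reduced w)
    (k : ℕ) (hk : k ≤ w.length)
    (hpre : w.take k = (invWord w).take k)
    (hmax : k = w.length ∨ w[k]? ≠ (invWord w)[k]?) :
    2 * k ≤ w.length ∧
      CyclicallyReduced ((w.take (w.length - k)).drop k) ∧
      FreeGroup.mk w =
        FreeGroup.mk (w.take k) * FreeGroup.mk ((w.take (w.length - k)).drop k) *
          (FreeGroup.mk (w.take k))⁻¹ := by
  rw [reduced_iff_isReduced] at hw
  rw [invWord_eq_invRev] at hpre hmax
  rw [take_invRev] at hpre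
  have h2k := hw.two_mul_le_length hk hpre
  set u := w.take k
  set c := (w.take (w.length - k)).drop k
  have hsuffix : w.drop (w.length - k) = invRev u := by
    rw [hpre, invRev_invRev]
  have hdecomp : w = u ++ c ++ invRev u := by
    rw [← hsuffix]
    exact (w.take_append_drop_take_append_drop (by omega)).symm
  refine ⟨h2k, ?_, ?_⟩
  · apply IsCyclicallyReduced.cyclicallyReduced
    rcases hmax with hkn | hne
    · rw [show c = [] by simp [c]; omega]
      exact .nil
    · rw [hdecomp, ← length_take_of_le hk] at hne
      exact isCyclicallyReduced_of_getElem?_ne_invRev (hdecomp ▸ hw) hne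
  · rw [inv_mk, mul_mk, mul_mk, ← hdecomp]
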